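/- Under SCAR with π̄_k = c_k(1−π_k) and the identity p(x|ȳ_k=1) = p(x|y≠k), the total one-versus-rest risk can equivalently be written as R(f_1,...,f_q) = Σ_{k=1}^q [ E_{p(x)} ℓ(f_k(x)) − (1−π_k) E_{p(x|y≠k)} ℓ(f_k(x)) + (1−π_k) E_{p(x|y≠k)} ℓ(−f_k(x)) ]. -/

import Mathlib

/-!
Write `a k j = E_{p(x|y=j)} ℓ(f_k)` and `b k j = E_{p(x|y=j)} ℓ(−f_k)`. Both `p(x)` and
`(1−π_k) p(x|y≠k)` are mixtures of the class conditionals, so the `k`-th summand on the right is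
`π_k a k k + Σ_{j≠k} π_j b k j`, while the `k`-th summand of the risk is
`π_k a k k + Σ_{j≠k} π_k b j k`. The two double sums over off-diagonal pairs agree after
exchanging the roles of `j` and `k`.
-/

open MeasureTheory Finset

theorem Finset.sum_sum_erase_comm {ι M : Type*} [DecidableEq ι] [AddCommGroup M]
    (s : Finset ι) (A : ι → ι → M) :
    ∑ i ∈ s, ∑ j ∈ s.erase i, A i j = ∑ i ∈ s, ∑ j ∈ s.erase i, A j i := by
  rw [sum_congr rfl fun i hi => sum_erase_eq_sub (f := A i) hi,
    sum_congr rfl fun i hi => sum_erase_eq_sub (f := fun j => A j i) hi,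
    sum_sub_distrib, sum_sub_distrib, sum_comm]

theorem MeasureTheory.integral_finsetSum_ofReal_smul_measure {X ι : Type*} [MeasurableSpace X]
    {s : Finset ι} {w : ι → ℝ} (hw : ∀ j ∈ s, 0 ≤ w j) {μ : ι → Measure X} {g : X → ℝ}
    (hg : ∀ j ∈ s, Integrable g (μ j)) :
    ∫ x, g x ∂(∑ j ∈ s, ENNReal.ofReal (w j) • μ j) = ∑ j ∈ s, w j * ∫ x, g x ∂(μ j) := by
  rw [integral_finsetSum_measure fun j hj => (hg j hj).smul_measure ENNReal.ofReal_ne_top]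
  refine sum_congr rfl fun j hj => ?_
  rw [integral_smul_measure, ENNReal.toReal_ofReal (hw j hj), smul_eq_mul]

theorem MeasureTheory.mul_integral_eq_sum_of_ofReal_smul_eq {X ι : Type*} [MeasurableSpace X]
    {ν : Measure X} {c : ℝ} (hc : 0 ≤ c) {s : Finset ι} {w : ι → ℝ} (hw : ∀ j ∈ s, 0 ≤ w j)
    {μ : ι → Measure X} (hν : ENNReal.ofReal c • ν = ∑ j ∈ s, ENNReal.ofReal (w j) • μ j)
    {g : X → ℝ} (hg : ∀ j ∈ s, Integrable g (μ j)) :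
    c * ∫ x, g x ∂ν = ∑ j ∈ s, w j * ∫ x, g x ∂(μ j) := by
  rw [← integral_finsetSum_ofReal_smul_measure hw hg, ← hν, integral_smul_measure,
    ENNReal.toReal_ofReal hc, smul_eq_mul]

theorem total_risk_rewrite_general
    {X : Type*} [MeasurableSpace X] {q : ℕ}
    (μX : Measure X) (μP μN : Fin q → Measure X)
    (π : Fin q → ℝ) (l : ℝ → ℝ) (f : Fin q → X → ℝ)
    (hπ : ∀ k, 0 ≤ π k) (hsum : ∑ k, π k = 1)
    -- the marginal density satisfies p(x) = π_k p(x|y=k) + (1−π_k) p(x|y≠k)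
    (hmarg : ∀ k, μX = (ENNReal.ofReal (π k)) • μP k + (ENNReal.ofReal (1 - π k)) • μN k)
    -- (1−π_k) p(x|y≠k) = Σ_{j≠k} π_j p(x|y=j)
    (hrel : ∀ k, (ENNReal.ofReal (1 - π k)) • μN k
      = ∑ j ∈ Finset.univ.erase k, (ENNReal.ofReal (π j)) • μP j)
    (hint : ∀ k j, Integrable (fun x => l (f k x)) (μP j))
    (hint' : ∀ k j, Integrable (fun x => l (-(f k x))) (μP j)) :
    ∑ k, (π k) * ∫ x, (l (f k x) + ∑ j ∈ Finset.univ.erase k, l (-(f j x))) ∂(μP k)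
      = ∑ k, ((∫ x, l (f k x) ∂μX)
          - (1 - π k) * ∫ x, l (f k x) ∂(μN k)
          + (1 - π k) * ∫ x, l (-(f k x)) ∂(μN k)) := by
  have hπc : ∀ k, 0 ≤ 1 - π k := fun k =>
    sub_nonneg.2 (hsum ▸ single_le_sum (fun j _ => hπ j) (mem_univ k))
  have hN : ∀ k (g : X → ℝ), (∀ j, Integrable g (μP j)) →
      (1 - π k) * ∫ x, g x ∂(μN k) = ∑ j ∈ univ.erase k, π j * ∫ x, g x ∂(μP j) :=
    fun k _ hg => mul_integral_eq_sum_of_ofReal_smul_eq (hπc k) (fun j _ => hπ j) (hrel k)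
      fun j _ => hg j
  have hX : ∀ k, ∫ x, l (f k x) ∂μX = ∑ j, π j * ∫ x, l (f k x) ∂(μP j) := by
    intro k
    rw [hmarg k, hrel k, add_sum_erase _ (fun j => ENNReal.ofReal (π j) • μP j) (mem_univ k),
      integral_finsetSum_ofReal_smul_measure (fun j _ => hπ j) (fun j _ => hint k j)]
  have hrisk : ∀ k, π k * ∫ x, (l (f k x) + ∑ j ∈ univ.erase k, l (-(f j x))) ∂(μP k)
      = π k * ∫ x, l (f k x) ∂(μP k) + ∑ j ∈ univ.erase k, π k * ∫ x, l (-(f j x)) ∂(μP k) := by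
    intro k
    rw [integral_add (hint k k) (integrable_finsetSum _ fun j _ => hint' j k),
      integral_finsetSum _ fun j _ => hint' j k, mul_add, mul_sum]
  have hsummand : ∀ k, ∫ x, l (f k x) ∂μX - (1 - π k) * ∫ x, l (f k x) ∂(μN k)
      + (1 - π k) * ∫ x, l (-(f k x)) ∂(μN k)
      = π k * ∫ x, l (f k x) ∂(μP k) + ∑ j ∈ univ.erase k, π j * ∫ x, l (-(f k x)) ∂(μP j) := by
    intro k
    rw [hX k, hN k _ (hint k), hN k _ (hint' k), ← add_sum_erase _ _ (mem_univ k),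
      add_sub_cancel_right]
  rw [sum_congr rfl fun k _ => hrisk k, sum_congr rfl fun k _ => hsummand k, sum_add_distrib,
    sum_add_distrib, sum_sum_erase_comm]

/-- under SCAR (π̄_k = c_k(1−π_k) and p(x|ȳ_k=1) = p(x|y≠k)), the total
one-versus-rest risk can be written as
R(f_1,...,f_q) = Σ_k [E_{p(x)} ℓ(f_k) − (1−π_k) E_{p(x|y≠k)} ℓ(f_k) + (1−π_k) E_{p(x|y≠k)} ℓ(−f_k)].
`μX` is the marginal p(x), `μP k` is p(x|y=k), `μN k` is p(x|y≠k), `μbar1 k` is p(x|ȳ_k=1). -/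
theorem total_risk_rewrite
    {X : Type*} [MeasurableSpace X] {q : ℕ}
    (μX : Measure X) (μP μN μbar1 : Fin q → Measure X)
    [IsProbabilityMeasure μX]
    [∀ k, IsProbabilityMeasure (μP k)] [∀ k, IsProbabilityMeasure (μN k)]
    [∀ k, IsProbabilityMeasure (μbar1 k)]
    (π πbar ck : Fin q → ℝ) (l : ℝ → ℝ) (f : Fin q → X → ℝ)
    (hl : ∀ z, 0 ≤ l z)
    (hπ : ∀ k, 0 ≤ π k) (hsum : ∑ k, π k = 1)
    -- SCAR
    (hscar : ∀ k, μbar1 k = μN k) (hpibar : ∀ k, πbar k = ck k * (1 - π k))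
    -- the marginal density satisfies p(x) = π_k p(x|y=k) + (1−π_k) p(x|y≠k)
    (hmarg : ∀ k, μX = (ENNReal.ofReal (π k)) • μP k + (ENNReal.ofReal (1 - π k)) • μN k)
    -- (1−π_k) p(x|y≠k) = Σ_{j≠k} π_j p(x|y=j)
    (hrel : ∀ k, (ENNReal.ofReal (1 - π k)) • μN k
      = ∑ j ∈ Finset.univ.erase k, (ENNReal.ofReal (π j)) • μP j)
    (hmeas : ∀ k, Measurable (f k)) (hmeasl : Measurable l)
    (hint : ∀ k j, Integrable (fun x => l (f k x)) (μP j))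
    (hint' : ∀ k j, Integrable (fun x => l (-(f k x))) (μP j))
    (hintX : ∀ k, Integrable (fun x => l (f k x)) μX)
    (hintN : ∀ k, Integrable (fun x => l (f k x)) (μN k))
    (hintN' : ∀ k, Integrable (fun x => l (-(f k x))) (μN k)) :
    ∑ k, (π k) * ∫ x, (l (f k x) + ∑ j ∈ Finset.univ.erase k, l (-(f j x))) ∂(μP k)
      = ∑ k, ((∫ x, l (f k x) ∂μX)
          - (1 - π k) * ∫ x, l (f k x) ∂(μN k)
          + (1 - π k) * ∫ x, l (-(f k x)) ∂(μN k)) :=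
  total_risk_rewrite_general μX μP μN π l f hπ hsum hmarg hrel hint hint'
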